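/- arXiv:1305.3912 — 8 statements merged into one kernel-verified Lean document; each statement's English description precedes it below -/
import Mathlib

section
/- The set {S(X') : X' ∈ E, X' ≺ X} is nonempty and bounded above, the set {S(X'') : X'' ∈ E, X ≺ X''} is nonempty and bounded below, and S₋(X) ≤ S₊(X) for every X ∈ Ω. (Proposition 1 (a) and second half of (b).) -/
/-- The set of entropies of equilibrium states from which `X` is adiabatically accessible. -/
def lowerSet {Ω : Type*} (prec : Ω → Ω → Prop) (E : Set Ω) (S : Ω → ℝ) (X : Ω) : Set ℝ :=
  {s | ∃ Z ∈ E, prec Z X ∧ S Z = s}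

/-- The set of entropies of equilibrium states adiabatically accessible from `X`. -/
def upperSet {Ω : Type*} (prec : Ω → Ω → Prop) (E : Set Ω) (S : Ω → ℝ) (X : Ω) : Set ℝ :=
  {s | ∃ Z ∈ E, prec X Z ∧ S Z = s}

/-- The lower non-equilibrium entropy S₋. -/
noncomputable def Sminus {Ω : Type*} (prec : Ω → Ω → Prop) (E : Set Ω) (S : Ω → ℝ) (X : Ω) : ℝ :=
  sSup (lowerSet prec E S X)

/-- The upper non-equilibrium entropy S₊. -/
noncomputable def Splus {Ω : Type*} (prec : Ω → Ω → Prop) (E : Set Ω) (S : Ω → ℝ) (X : Ω) : ℝ :=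
  sInf (upperSet prec E S X)

section

variable {Ω : Type*} {prec : Ω → Ω → Prop} {E : Set Ω} {S : Ω → ℝ} {X : Ω}

lemma mem_lowerSet_of_prec {Z : Ω} (hZ : Z ∈ E) (hZX : prec Z X) : S Z ∈ lowerSet prec E S X :=
  ⟨Z, hZ, hZX, rfl⟩

lemma mem_upperSet_of_prec {Z : Ω} (hZ : Z ∈ E) (hXZ : prec X Z) : S Z ∈ upperSet prec E S X :=
  ⟨Z, hZ, hXZ, rfl⟩

lemma le_of_mem_lowerSet_of_mem_upperSet
    (TRANS : ∀ x y z : Ω, prec x y → prec y z → prec x z)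
    (MONO : ∀ x ∈ E, ∀ y ∈ E, prec x y → S x ≤ S y)
    {a b : ℝ} (ha : a ∈ lowerSet prec E S X) (hb : b ∈ upperSet prec E S X) : a ≤ b := by
  obtain ⟨Z, hZ, hZX, rfl⟩ := ha
  obtain ⟨W, hW, hXW, rfl⟩ := hb
  exact MONO Z hZ W hW (TRANS _ _ _ hZX hXW)

lemma Sminus_le_Splus
    (TRANS : ∀ x y z : Ω, prec x y → prec y z → prec x z)
    (MONO : ∀ x ∈ E, ∀ y ∈ E, prec x y → S x ≤ S y)
    (hlower : (lowerSet prec E S X).Nonempty) (hupper : (upperSet prec E S X).Nonempty) :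
    Sminus prec E S X ≤ Splus prec E S X :=
  csSup_le hlower fun _ ha =>
    le_csInf hupper fun _ hb => le_of_mem_lowerSet_of_mem_upperSet TRANS MONO ha hb

end

/-- Proposition 1 (a) and second half of (b). -/
theorem stmt_0 {Ω : Type*} (prec : Ω → Ω → Prop) (E : Set Ω) (S : Ω → ℝ)
    (TRANS : ∀ x y z : Ω, prec x y → prec y z → prec x z)
    (MONO : ∀ x ∈ E, ∀ y ∈ E, prec x y → S x ≤ S y)
    (N2 : ∀ X : Ω, ∃ X' ∈ E, ∃ X'' ∈ E, prec X' X ∧ prec X X'') :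
    ∀ X : Ω,
      (lowerSet prec E S X).Nonempty ∧ BddAbove (lowerSet prec E S X) ∧
      (upperSet prec E S X).Nonempty ∧ BddBelow (upperSet prec E S X) ∧
      Sminus prec E S X ≤ Splus prec E S X := by
  intro X
  obtain ⟨X', hX', X'', hX'', hX'X, hXX''⟩ := N2 X
  have hlower' : S X' ∈ lowerSet prec E S X := mem_lowerSet_of_prec hX' hX'X
  have hupper'' : S X'' ∈ upperSet prec E S X := mem_upperSet_of_prec hX'' hXX''
  refine ⟨⟨_, hlower'⟩, ⟨S X'', fun _ ha => ?_⟩, ⟨_, hupper''⟩, ⟨S X', fun _ hb => ?_⟩,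
    Sminus_le_Splus TRANS MONO ⟨_, hlower'⟩ ⟨_, hupper''⟩⟩
  · exact le_of_mem_lowerSet_of_mem_upperSet TRANS MONO ha hupper''
  · exact le_of_mem_lowerSet_of_mem_upperSet TRANS MONO hlower' hb
end

section
/- If X ≺ Y then S₋(X) ≤ S₋(Y) and S₊(X) ≤ S₊(Y); that is, both S₋ and S₊ are monotone with respect to adiabatic accessibility. (Proposition 1 (d).) -/
/-! By transitivity, `X ≺ Y` enlarges the set of entropies of equilibrium states below and shrinks
the set of those above. Axiom N2 makes these sets nonempty and, through MONO, bounds each by an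
entropy on the other side, so that `sSup`/`sInf` are genuine suprema/infima rather than junk
values and respect inclusion. -/

section Accessibility

variable {Ω : Type*} {prec : Ω → Ω → Prop} {E : Set Ω} {S : Ω → ℝ}

theorem lowerSet_subset_of_prec (TRANS : ∀ x y z : Ω, prec x y → prec y z → prec x z)
    {X Y : Ω} (hXY : prec X Y) : lowerSet prec E S X ⊆ lowerSet prec E S Y := by
  rintro _ ⟨Z, hZE, hZX, rfl⟩
  exact ⟨Z, hZE, TRANS _ _ _ hZX hXY, rfl⟩

theorem upperSet_subset_of_prec (TRANS : ∀ x y z : Ω, prec x y → prec y z → prec x z)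
    {X Y : Ω} (hXY : prec X Y) : upperSet prec E S Y ⊆ upperSet prec E S X := by
  rintro _ ⟨Z, hZE, hYZ, rfl⟩
  exact ⟨Z, hZE, TRANS _ _ _ hXY hYZ, rfl⟩

theorem lowerSet_nonempty {X X' : Ω} (hX'E : X' ∈ E) (hX'X : prec X' X) :
    (lowerSet prec E S X).Nonempty :=
  ⟨S X', X', hX'E, hX'X, rfl⟩

theorem upperSet_nonempty {X X'' : Ω} (hX''E : X'' ∈ E) (hXX'' : prec X X'') :
    (upperSet prec E S X).Nonempty :=
  ⟨S X'', X'', hX''E, hXX'', rfl⟩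

theorem bddAbove_lowerSet (TRANS : ∀ x y z : Ω, prec x y → prec y z → prec x z)
    (MONO : ∀ x ∈ E, ∀ y ∈ E, prec x y → S x ≤ S y)
    {X X'' : Ω} (hX''E : X'' ∈ E) (hXX'' : prec X X'') :
    BddAbove (lowerSet prec E S X) := by
  refine ⟨S X'', ?_⟩
  rintro _ ⟨Z, hZE, hZX, rfl⟩
  exact MONO _ hZE _ hX''E (TRANS _ _ _ hZX hXX'')

theorem bddBelow_upperSet (TRANS : ∀ x y z : Ω, prec x y → prec y z → prec x z)
    (MONO : ∀ x ∈ E, ∀ y ∈ E, prec x y → S x ≤ S y)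
    {X X' : Ω} (hX'E : X' ∈ E) (hX'X : prec X' X) :
    BddBelow (upperSet prec E S X) := by
  refine ⟨S X', ?_⟩
  rintro _ ⟨Z, hZE, hXZ, rfl⟩
  exact MONO _ hX'E _ hZE (TRANS _ _ _ hX'X hXZ)

theorem Sminus_le_Sminus_of_prec (TRANS : ∀ x y z : Ω, prec x y → prec y z → prec x z)
    (MONO : ∀ x ∈ E, ∀ y ∈ E, prec x y → S x ≤ S y)
    (N2 : ∀ X : Ω, ∃ X' ∈ E, ∃ X'' ∈ E, prec X' X ∧ prec X X'')
    {X Y : Ω} (hXY : prec X Y) : Sminus prec E S X ≤ Sminus prec E S Y := by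
  obtain ⟨X', hX'E, -, -, hX'X, -⟩ := N2 X
  obtain ⟨-, -, Y'', hY''E, -, hYY''⟩ := N2 Y
  exact csSup_le_csSup (bddAbove_lowerSet TRANS MONO hY''E hYY'')
    (lowerSet_nonempty hX'E hX'X) (lowerSet_subset_of_prec TRANS hXY)

theorem Splus_le_Splus_of_prec (TRANS : ∀ x y z : Ω, prec x y → prec y z → prec x z)
    (MONO : ∀ x ∈ E, ∀ y ∈ E, prec x y → S x ≤ S y)
    (N2 : ∀ X : Ω, ∃ X' ∈ E, ∃ X'' ∈ E, prec X' X ∧ prec X X'')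
    {X Y : Ω} (hXY : prec X Y) : Splus prec E S X ≤ Splus prec E S Y := by
  obtain ⟨X', hX'E, -, -, hX'X, -⟩ := N2 X
  obtain ⟨-, -, Y'', hY''E, -, hYY''⟩ := N2 Y
  exact csInf_le_csInf (bddBelow_upperSet TRANS MONO hX'E hX'X)
    (upperSet_nonempty hY''E hYY'') (upperSet_subset_of_prec TRANS hXY)

end Accessibility

/-- Proposition 1 (d): S₋ and S₊ are monotone with respect to ≺. -/
theorem stmt_2 {Ω : Type*} (prec : Ω → Ω → Prop) (E : Set Ω) (S : Ω → ℝ)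
    (TRANS : ∀ x y z : Ω, prec x y → prec y z → prec x z)
    (MONO : ∀ x ∈ E, ∀ y ∈ E, prec x y → S x ≤ S y)
    (N2 : ∀ X : Ω, ∃ X' ∈ E, ∃ X'' ∈ E, prec X' X ∧ prec X X'') :
    ∀ X Y : Ω, prec X Y →
      Sminus prec E S X ≤ Sminus prec E S Y ∧ Splus prec E S X ≤ Splus prec E S Y :=
  fun _ _ hXY => ⟨Sminus_le_Sminus_of_prec TRANS MONO N2 hXY,
    Splus_le_Splus_of_prec TRANS MONO N2 hXY⟩
end

section
/- For any X, Y ∈ Ω, if S₊(X) ≤ S₋(Y) then X ≺ Y. (Proposition 1 (e).) -/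
theorem stmt_3_general {Ω : Type*} (prec : Ω → Ω → Prop) (E : Set Ω) (S : Ω → ℝ)
    (TRANS : ∀ x y z : Ω, prec x y → prec y z → prec x z)
    (CHAR : ∀ x ∈ E, ∀ y ∈ E, (prec x y ↔ S x ≤ S y))
    (ATT : ∀ X : Ω, ∃ X' ∈ E, ∃ X'' ∈ E, prec X' X ∧ prec X X'' ∧
      S X' = Sminus prec E S X ∧ S X'' = Splus prec E S X) :
    ∀ X Y : Ω, Splus prec E S X ≤ Sminus prec E S Y → prec X Y := by
  intro X Y h
  obtain ⟨-, -, X'', hX''E, -, hXX'', -, hSX''⟩ := ATT X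
  obtain ⟨Y', hY'E, -, -, hY'Y, -, hSY', -⟩ := ATT Y
  have hX''Y' : prec X'' Y' := (CHAR X'' hX''E Y' hY'E).2 (hSX''.trans_le (h.trans_eq hSY'.symm))
  exact TRANS X Y' Y (TRANS X X'' Y' hXX'' hX''Y') hY'Y

/-- Proposition 1 (e): S₊(X) ≤ S₋(Y) implies X ≺ Y. -/
theorem stmt_3 {Ω : Type*} (prec : Ω → Ω → Prop) (E : Set Ω) (S : Ω → ℝ)
    (TRANS : ∀ x y z : Ω, prec x y → prec y z → prec x z)
    (MONO : ∀ x ∈ E, ∀ y ∈ E, prec x y → S x ≤ S y)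
    (N2 : ∀ X : Ω, ∃ X' ∈ E, ∃ X'' ∈ E, prec X' X ∧ prec X X'')
    (CHAR : ∀ x ∈ E, ∀ y ∈ E, (prec x y ↔ S x ≤ S y))
    (ATT : ∀ X : Ω, ∃ X' ∈ E, ∃ X'' ∈ E, prec X' X ∧ prec X X'' ∧
      S X' = Sminus prec E S X ∧ S X'' = Splus prec E S X) :
    ∀ X Y : Ω, Splus prec E S X ≤ Sminus prec E S Y → prec X Y :=
  stmt_3_general prec E S TRANS CHAR ATT
end

section
/- If Ŝ : Ω → ℝ is any function that coincides with S on E and satisfies that X ≺ Y implies Ŝ(X) ≤ Ŝ(Y), then S₋(X) ≤ Ŝ(X) ≤ S₊(X) for every X ∈ Ω. (Proposition 1 (g).) -/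
section MonotoneExtension

variable {Ω : Type*} {prec : Ω → Ω → Prop} {E : Set Ω} {S Shat : Ω → ℝ} {X : Ω}

lemma upperBounds_lowerSet_of_monotone_extension (hext : ∀ Z ∈ E, Shat Z = S Z)
    (hmono : ∀ X Y : Ω, prec X Y → Shat X ≤ Shat Y) :
    Shat X ∈ upperBounds (lowerSet prec E S X) := by
  rintro _ ⟨Z, hZ, hZX, rfl⟩
  rw [← hext Z hZ]
  exact hmono Z X hZX

lemma lowerBounds_upperSet_of_monotone_extension (hext : ∀ Z ∈ E, Shat Z = S Z)
    (hmono : ∀ X Y : Ω, prec X Y → Shat X ≤ Shat Y) :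
    Shat X ∈ lowerBounds (upperSet prec E S X) := by
  rintro _ ⟨Z, hZ, hXZ, rfl⟩
  rw [← hext Z hZ]
  exact hmono X Z hXZ

lemma Sminus_le_of_monotone_extension (hne : (lowerSet prec E S X).Nonempty)
    (hext : ∀ Z ∈ E, Shat Z = S Z) (hmono : ∀ X Y : Ω, prec X Y → Shat X ≤ Shat Y) :
    Sminus prec E S X ≤ Shat X :=
  csSup_le hne (upperBounds_lowerSet_of_monotone_extension hext hmono)

lemma le_Splus_of_monotone_extension (hne : (upperSet prec E S X).Nonempty)
    (hext : ∀ Z ∈ E, Shat Z = S Z) (hmono : ∀ X Y : Ω, prec X Y → Shat X ≤ Shat Y) :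
    Shat X ≤ Splus prec E S X :=
  le_csInf hne (lowerBounds_upperSet_of_monotone_extension hext hmono)

end MonotoneExtension

theorem stmt_5_general {Ω : Type*} (prec : Ω → Ω → Prop) (E : Set Ω) (S : Ω → ℝ)
    (N2 : ∀ X : Ω, ∃ X' ∈ E, ∃ X'' ∈ E, prec X' X ∧ prec X X'') :
    ∀ Shat : Ω → ℝ, (∀ Z ∈ E, Shat Z = S Z) →
      (∀ X Y : Ω, prec X Y → Shat X ≤ Shat Y) →
      ∀ X : Ω, Sminus prec E S X ≤ Shat X ∧ Shat X ≤ Splus prec E S X := by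
  intro Shat hext hmono X
  obtain ⟨X', hX', X'', hX'', hX'X, hXX''⟩ := N2 X
  exact ⟨Sminus_le_of_monotone_extension ⟨S X', X', hX', hX'X, rfl⟩ hext hmono,
    le_Splus_of_monotone_extension ⟨S X'', X'', hX'', hXX'', rfl⟩ hext hmono⟩

/-- Proposition 1 (g): any monotone extension Ŝ of S lies between S₋ and S₊. -/
theorem stmt_5 {Ω : Type*} (prec : Ω → Ω → Prop) (E : Set Ω) (S : Ω → ℝ)
    (TRANS : ∀ x y z : Ω, prec x y → prec y z → prec x z)
    (MONO : ∀ x ∈ E, ∀ y ∈ E, prec x y → S x ≤ S y)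
    (N2 : ∀ X : Ω, ∃ X' ∈ E, ∃ X'' ∈ E, prec X' X ∧ prec X X'')
    (ATT : ∀ X : Ω, ∃ X' ∈ E, ∃ X'' ∈ E, prec X' X ∧ prec X X'' ∧
      S X' = Sminus prec E S X ∧ S X'' = Splus prec E S X) :
    ∀ Shat : Ω → ℝ, (∀ Z ∈ E, Shat Z = S Z) →
      (∀ X Y : Ω, prec X Y → Shat X ≤ Shat Y) →
      ∀ X : Ω, Sminus prec E S X ≤ Shat X ∧ Shat X ≤ Splus prec E S X :=
  stmt_5_general prec E S N2
end

section
/- If S₋(X) = S₊(X) for all X ∈ Ω, then the common extension Ŝ := S₋ characterizes the relation: for all X, Y ∈ Ω, Ŝ(X) ≤ Ŝ(Y) implies X ≺ Y. (Theorem 4, implication (ii) ⟹ (iii).) -/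
theorem prec_of_Splus_le_Sminus {Ω : Type*} {prec : Ω → Ω → Prop} {E : Set Ω} {S : Ω → ℝ}
    (TRANS : ∀ x y z : Ω, prec x y → prec y z → prec x z)
    (CHAR : ∀ x ∈ E, ∀ y ∈ E, S x ≤ S y → prec x y) {X Y : Ω}
    (hX : ∃ X'' ∈ E, prec X X'' ∧ S X'' = Splus prec E S X)
    (hY : ∃ Y' ∈ E, prec Y' Y ∧ S Y' = Sminus prec E S Y)
    (h : Splus prec E S X ≤ Sminus prec E S Y) : prec X Y := by
  obtain ⟨X'', hX''E, hXX'', hSX''⟩ := hX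
  obtain ⟨Y', hY'E, hY'Y, hSY'⟩ := hY
  have hX''Y' : prec X'' Y' := CHAR _ hX''E _ hY'E (by rwa [hSX'', hSY'])
  exact TRANS _ _ _ (TRANS _ _ _ hXX'' hX''Y') hY'Y

theorem stmt_7_general {Ω : Type*} (prec : Ω → Ω → Prop) (E : Set Ω) (S : Ω → ℝ)
    (TRANS : ∀ x y z : Ω, prec x y → prec y z → prec x z)
    (CHAR : ∀ x ∈ E, ∀ y ∈ E, (prec x y ↔ S x ≤ S y))
    (ATT : ∀ X : Ω, ∃ X' ∈ E, ∃ X'' ∈ E, prec X' X ∧ prec X X'' ∧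
      S X' = Sminus prec E S X ∧ S X'' = Splus prec E S X)
    (hEq : ∀ X : Ω, Sminus prec E S X = Splus prec E S X) :
    ∀ X Y : Ω, Sminus prec E S X ≤ Sminus prec E S Y → prec X Y := by
  intro X Y h
  obtain ⟨-, -, X'', hX''E, -, hXX'', -, hSX''⟩ := ATT X
  obtain ⟨Y', hY'E, -, -, hY'Y, -, hSY', -⟩ := ATT Y
  exact prec_of_Splus_le_Sminus TRANS (fun x hx y hy => (CHAR x hx y hy).mpr)
    ⟨X'', hX''E, hXX'', hSX''⟩ ⟨Y', hY'E, hY'Y, hSY'⟩ (hEq X ▸ h)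

/-- Theorem 4, (ii) ⟹ (iii): if S₋ = S₊ everywhere, then Ŝ := S₋
characterizes the relation: Ŝ(X) ≤ Ŝ(Y) implies X ≺ Y. -/
theorem stmt_7 {Ω : Type*} (prec : Ω → Ω → Prop) (E : Set Ω) (S : Ω → ℝ)
    (TRANS : ∀ x y z : Ω, prec x y → prec y z → prec x z)
    (MONO : ∀ x ∈ E, ∀ y ∈ E, prec x y → S x ≤ S y)
    (N2 : ∀ X : Ω, ∃ X' ∈ E, ∃ X'' ∈ E, prec X' X ∧ prec X X'')
    (CHAR : ∀ x ∈ E, ∀ y ∈ E, (prec x y ↔ S x ≤ S y))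
    (ATT : ∀ X : Ω, ∃ X' ∈ E, ∃ X'' ∈ E, prec X' X ∧ prec X X'' ∧
      S X' = Sminus prec E S X ∧ S X'' = Splus prec E S X)
    (hEq : ∀ X : Ω, Sminus prec E S X = Splus prec E S X) :
    ∀ X Y : Ω, Sminus prec E S X ≤ Sminus prec E S Y → prec X Y :=
  stmt_7_general prec E S TRANS CHAR ATT hEq
end

section
/- If S₋(X) = S₊(X) for all X ∈ Ω, then every X ∈ Ω is adiabatically equivalent to some equilibrium state: there exists Z ∈ E with X ≺ Z and Z ≺ X. (Theorem 4, implication (ii) ⟹ (vi).) -/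
theorem stmt_10_general {Ω : Type*} (prec : Ω → Ω → Prop) (E : Set Ω) (S : Ω → ℝ)
    (TRANS : ∀ x y z : Ω, prec x y → prec y z → prec x z)
    (CHAR : ∀ x ∈ E, ∀ y ∈ E, (prec x y ↔ S x ≤ S y))
    (ATT : ∀ X : Ω, ∃ X' ∈ E, ∃ X'' ∈ E, prec X' X ∧ prec X X'' ∧
      S X' = Sminus prec E S X ∧ S X'' = Splus prec E S X)
    (hEq : ∀ X : Ω, Sminus prec E S X = Splus prec E S X) :
    ∀ X : Ω, ∃ Z ∈ E, prec X Z ∧ prec Z X := by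
  intro X
  obtain ⟨X', hX'E, X'', hX''E, hX'X, hXX'', hSX', hSX''⟩ := ATT X
  have hX''X' : prec X'' X' := (CHAR X'' hX''E X' hX'E).mpr (by rw [hSX'', hSX', hEq])
  exact ⟨X'', hX''E, hXX'', TRANS X'' X' X hX''X' hX'X⟩

/-- Theorem 4, (ii) ⟹ (vi): if S₋ = S₊ everywhere, then every state is
adiabatically equivalent to some equilibrium state. -/
theorem stmt_10 {Ω : Type*} (prec : Ω → Ω → Prop) (E : Set Ω) (S : Ω → ℝ)
    (TRANS : ∀ x y z : Ω, prec x y → prec y z → prec x z)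
    (MONO : ∀ x ∈ E, ∀ y ∈ E, prec x y → S x ≤ S y)
    (N2 : ∀ X : Ω, ∃ X' ∈ E, ∃ X'' ∈ E, prec X' X ∧ prec X X'')
    (CHAR : ∀ x ∈ E, ∀ y ∈ E, (prec x y ↔ S x ≤ S y))
    (ATT : ∀ X : Ω, ∃ X' ∈ E, ∃ X'' ∈ E, prec X' X ∧ prec X X'' ∧
      S X' = Sminus prec E S X ∧ S X'' = Splus prec E S X)
    (hEq : ∀ X : Ω, Sminus prec E S X = Splus prec E S X) :
    ∀ X : Ω, ∃ Z ∈ E, prec X Z ∧ prec Z X :=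
  stmt_10_general prec E S TRANS CHAR ATT hEq
end

section
/- In the toy model of two copper pieces, the lower entropy is given by S₋(T₁,T₂) = log(min(T₁,T₂)): for all T₁, T₂ > 0, sSup {log T : T > 0 and (T,T) ≺ (T₁,T₂)} = log(min(T₁,T₂)). (Formula for S₋ in Section 3.4.) -/
/-- The adiabatic accessibility relation of the toy model of two copper pieces:
rubbing plus heat conduction toward the mean temperature. -/
def toyPrec (X Y : ℝ × ℝ) : Prop :=
  ∃ t ∈ Set.Icc (0 : ℝ) 1,
    Y.1 ≥ (1 - t) * X.1 + t * ((X.1 + X.2) / 2) ∧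
    Y.2 ≥ (1 - t) * X.2 + t * ((X.1 + X.2) / 2)

theorem toyPrec_diag_iff_le_min {T : ℝ} {Y : ℝ × ℝ} :
    toyPrec (T, T) Y ↔ T ≤ min Y.1 Y.2 := by
  have fixed (t : ℝ) : (1 - t) * T + t * ((T + T) / 2) = T := by ring
  simp only [toyPrec, fixed, le_min_iff, ge_iff_le]
  exact ⟨fun ⟨_, _, h⟩ ↦ h, fun h ↦ ⟨0, ⟨le_rfl, zero_le_one⟩, h⟩⟩

/-- S₋(T₁,T₂) = log(min(T₁,T₂)) in the toy model. -/
theorem stmt_17 :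
    ∀ T₁ T₂ : ℝ, 0 < T₁ → 0 < T₂ →
      sSup {s : ℝ | ∃ T : ℝ, 0 < T ∧ toyPrec (T, T) (T₁, T₂) ∧ s = Real.log T}
        = Real.log (min T₁ T₂) := by
  intro T₁ T₂ h₁ h₂
  refine IsGreatest.csSup_eq
    ⟨⟨min T₁ T₂, lt_min h₁ h₂, toyPrec_diag_iff_le_min.2 le_rfl, rfl⟩, ?_⟩
  rintro _ ⟨T, hT, hprec, rfl⟩
  exact Real.log_le_log hT (toyPrec_diag_iff_le_min.1 hprec)
end

section
/- In the toy model of two copper pieces, the upper entropy is given by S₊(T₁,T₂) = log((T₁+T₂)/2): for all T₁, T₂ > 0, sInf {log T : T > 0 and (T₁,T₂) ≺ (T,T)} = log((T₁+T₂)/2). (Formula for S₊ in Section 3.4.) -/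
/-- Adding the two constraints eliminates `t`; conversely `t = 1` reaches the mean exactly. -/
theorem toyPrec_diag_iff_mean_le {T₁ T₂ T : ℝ} :
    toyPrec (T₁, T₂) (T, T) ↔ (T₁ + T₂) / 2 ≤ T := by
  constructor
  · rintro ⟨t, -, h₁, h₂⟩
    linarith
  · intro h
    exact ⟨1, ⟨zero_le_one, le_rfl⟩, by linarith, by linarith⟩

/-- S₊(T₁,T₂) = log((T₁+T₂)/2) in the toy model. -/
theorem stmt_18 :
    ∀ T₁ T₂ : ℝ, 0 < T₁ → 0 < T₂ →
      sInf {s : ℝ | ∃ T : ℝ, 0 < T ∧ toyPrec (T₁, T₂) (T, T) ∧ s = Real.log T}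
        = Real.log ((T₁ + T₂) / 2) := by
  intro T₁ T₂ h₁ h₂
  have hmean : 0 < (T₁ + T₂) / 2 := by positivity
  refine IsLeast.csInf_eq ⟨⟨_, hmean, toyPrec_diag_iff_mean_le.2 le_rfl, rfl⟩, ?_⟩
  rintro _ ⟨T, -, hT, rfl⟩
  exact Real.log_le_log hmean (toyPrec_diag_iff_mean_le.1 hT)
end
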